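/- arXiv:2603.20071 — 2 statements merged into one kernel-verified Lean document; each statement's English description precedes it below -/
import Mathlib

section
/- Let (X_m)_{m≥1} be a sequence of [0,1]-valued random variables adapted to a filtration (ℱ_m)_{m≥1} on a probability space, let F_m(x) = (1/m) Σ_{j=1}^m 1[X_j ≤ x] denote the empirical cumulative distribution function, and suppose the predictive distributions satisfy the Hill sandwich inequality: for every m ≥ 1 and every x ∈ [0,1), almost surely (m/(m+1))·F_m(x) ≤ P(X_{m+1} ≤ x | ℱ_m) ≤ (m/(m+1))·F_m(x) + 1/(m+1). Then for every positive integer r, the empirical moments M_{m,r} = (1/m) Σ_{j=1}^m X_j^r converge almost surely to a random variable as m → ∞. -/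
open MeasureTheory ProbabilityTheory Filter

/-!
Fix `x ∈ [0,1)` and let `S_n` count the `j ≤ n` with `X_j ≤ x`. The lower Hill bound says
`E[1[X_{n+1} ≤ x] | ℱ_n] ≥ S_n/(n+1)`, which is exactly what makes `S_n/(n+1)` a submartingale;
being bounded it converges a.s., hence so does the empirical cdf `F_m(x) = S_m/m`. Intersecting
over the countably many grid points `i/n` gives a full-measure event on which all `F_m(i/n)`
converge. On it, a continuous `f` on `[0,1]` (here `t ↦ t^r`) is uniformly close to the step
function `t ↦ f(⌈n t⌉/n)`, whose empirical mean is a fixed linear combination of the `F_m(i/n)`;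
so the empirical means of `f` are uniformly close to convergent sequences, hence Cauchy.
-/

open Finset Topology

noncomputable def empiricalMean (x : ℕ → ℝ) (f : ℝ → ℝ) (m : ℕ) : ℝ :=
  (∑ j ∈ Icc 1 m, f (x j)) / m

section EmpiricalMean

variable {x : ℕ → ℝ} {m : ℕ}

lemma empiricalMean_sub (f g : ℝ → ℝ) :
    empiricalMean x (fun t => f t - g t) m = empiricalMean x f m - empiricalMean x g m := by
  simp only [empiricalMean, sum_sub_distrib, sub_div]

lemma empiricalMean_const_mul (c : ℝ) (f : ℝ → ℝ) :
    empiricalMean x (fun t => c * f t) m = c * empiricalMean x f m := by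
  simp only [empiricalMean, ← mul_sum, mul_div_assoc]

lemma empiricalMean_sum {ι : Type*} (s : Finset ι) (f : ι → ℝ → ℝ) :
    empiricalMean x (fun t => ∑ i ∈ s, f i t) m = ∑ i ∈ s, empiricalMean x (f i) m := by
  simp only [empiricalMean, sum_comm (s := Icc 1 m), sum_div]

lemma empiricalMean_const (hm : m ≠ 0) (c : ℝ) : empiricalMean x (fun _ => c) m = c := by
  simp [empiricalMean, hm]

lemma abs_empiricalMean_sub_le {f g : ℝ → ℝ} {ε : ℝ} (h : ∀ j, |f (x j) - g (x j)| ≤ ε) (m : ℕ) :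
    |empiricalMean x f m - empiricalMean x g m| ≤ ε := by
  rcases Nat.eq_zero_or_pos m with rfl | hm
  · simpa [empiricalMean] using (abs_nonneg _).trans (h 0)
  rw [← empiricalMean_sub, empiricalMean, abs_div, Nat.abs_cast, div_le_iff₀ (by positivity)]
  calc |∑ j ∈ Icc 1 m, (f (x j) - g (x j))| ≤ ∑ j ∈ Icc 1 m, |f (x j) - g (x j)| :=
        abs_sum_le_sum_abs _ _
    _ ≤ ∑ j ∈ Icc 1 m, ε := sum_le_sum fun j _ => h j
    _ = ε * m := by simp [mul_comm]

end EmpiricalMean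

/-- `t ↦ f (⌈n t⌉₊ / n)` on `[0,1]` (`stepApprox_eq`), written through the indicators
`1[t ≤ i/n]` so that its empirical mean is a combination of empirical cdf values. -/
noncomputable def stepApprox (f : ℝ → ℝ) (n : ℕ) (t : ℝ) : ℝ :=
  f 1 - ∑ i ∈ range n, (f ((i + 1) / n) - f (i / n)) * if t ≤ i / n then 1 else 0

lemma stepApprox_eq {f : ℝ → ℝ} {n : ℕ} (hn : n ≠ 0) {t : ℝ} (ht : t ∈ Set.Icc 0 1) :
    stepApprox f n t = f (⌈n * t⌉₊ / n) := by
  have hn' : (0 : ℝ) < n := by positivity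
  have hN : ⌈n * t⌉₊ ≤ n := Nat.ceil_le.2 (by nlinarith [ht.2])
  have hind : ∀ i : ℕ, t ≤ i / n ↔ ⌈n * t⌉₊ ≤ i := fun i => by
    rw [Nat.ceil_le, le_div_iff₀ hn', mul_comm]
  have htele := sum_Ico_sub (fun i : ℕ => f (i / n)) hN
  push_cast at htele
  simp only [stepApprox, mul_ite, mul_one, mul_zero, hind, ← sum_filter, range_eq_Ico,
    Ico_filter_le, Nat.zero_max, htele, div_self hn'.ne']
  ring

lemma exists_abs_stepApprox_sub_le {f : ℝ → ℝ} (hf : ContinuousOn f (Set.Icc 0 1)) {ε : ℝ}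
    (hε : 0 < ε) : ∃ n, ∀ t ∈ Set.Icc (0 : ℝ) 1, |stepApprox f n t - f t| ≤ ε := by
  obtain ⟨δ, hδ, hfδ⟩ :=
    Metric.uniformContinuousOn_iff.1 (isCompact_Icc.uniformContinuousOn_of_continuous hf) ε hε
  obtain ⟨n, hn⟩ := exists_nat_gt (1 / δ)
  have hn' : (0 : ℝ) < n := (one_div_pos.2 hδ).trans hn
  refine ⟨n, fun t ht => ?_⟩
  have hnt : 0 ≤ n * t := mul_nonneg hn'.le ht.1
  have hN : (⌈n * t⌉₊ : ℝ) ≤ n := by exact_mod_cast Nat.ceil_le.2 (by nlinarith [ht.2])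
  have hlow : t ≤ ⌈n * t⌉₊ / n := by rw [le_div_iff₀ hn', mul_comm]; exact Nat.le_ceil _
  have hup : ⌈n * t⌉₊ / n < t + δ := by
    rw [div_lt_iff₀ hn']
    have := Nat.ceil_lt_add_one hnt
    have := (div_lt_iff₀ hδ).1 hn
    nlinarith
  rw [stepApprox_eq (by exact_mod_cast hn'.ne') ht, ← Real.dist_eq]
  refine (hfδ _ ⟨ht.1.trans hlow, (div_le_one hn').2 hN⟩ t ht ?_).le
  rw [Real.dist_eq, abs_of_nonneg (by linarith)]
  linarith

lemma exists_tendsto_empiricalMean_stepApprox {x : ℕ → ℝ} (f : ℝ → ℝ) {n : ℕ}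
    (hF : ∀ i < n,
      ∃ c, Tendsto (empiricalMean x fun t => if t ≤ i / n then 1 else 0) atTop (𝓝 c)) :
    ∃ L, Tendsto (empiricalMean x (stepApprox f n)) atTop (𝓝 L) := by
  choose! c hc using hF
  refine ⟨f 1 - ∑ i ∈ range n, (f ((i + 1) / n) - f (i / n)) * c i, ?_⟩
  refine (tendsto_const_nhds.sub (tendsto_finsetSum _ fun i hi =>
    (hc i (mem_range.1 hi)).const_mul _)).congr' ?_
  filter_upwards [eventually_ne_atTop 0] with m hm
  unfold stepApprox
  simp only [empiricalMean_sub, empiricalMean_const hm, empiricalMean_sum,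
    empiricalMean_const_mul]

lemma cauchySeq_of_uniform_approx {α ι : Type*} [PseudoMetricSpace α] [Nonempty ι]
    [SemilatticeSup ι] {a : ι → α}
    (h : ∀ ε > 0, ∃ b : ι → α, CauchySeq b ∧ ∀ m, dist (a m) (b m) ≤ ε) : CauchySeq a := by
  rw [Metric.cauchySeq_iff']
  intro ε hε
  obtain ⟨b, hb, hab⟩ := h (ε / 4) (by positivity)
  obtain ⟨N, hN⟩ := Metric.cauchySeq_iff'.1 hb (ε / 4) (by positivity)
  refine ⟨N, fun n hn => ?_⟩
  calc dist (a n) (a N) ≤ dist (a n) (b n) + dist (b n) (b N) + dist (b N) (a N) :=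
        dist_triangle4 _ _ _ _
    _ < ε := by linarith [hab n, hN n hn, dist_comm (a N) (b N) ▸ hab N]

theorem exists_tendsto_empiricalMean_of_tendsto_cdf {x : ℕ → ℝ} (hx : ∀ j, x j ∈ Set.Icc 0 1)
    (hF : ∀ n i : ℕ, i < n →
      ∃ c, Tendsto (empiricalMean x fun t => if t ≤ i / n then 1 else 0) atTop (𝓝 c))
    {f : ℝ → ℝ} (hf : ContinuousOn f (Set.Icc 0 1)) :
    ∃ L, Tendsto (empiricalMean x f) atTop (𝓝 L) := by
  refine cauchySeq_tendsto_of_complete (cauchySeq_of_uniform_approx fun ε hε => ?_)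
  obtain ⟨n, hn⟩ := exists_abs_stepApprox_sub_le hf hε
  obtain ⟨L, hL⟩ := exists_tendsto_empiricalMean_stepApprox f (hF n)
  refine ⟨_, hL.cauchySeq, fun m => ?_⟩
  rw [Real.dist_eq, abs_sub_comm]
  exact abs_empiricalMean_sub_le (fun j => hn _ (hx j)) m

section PartialSums

variable {Ω : Type*} {m0 : MeasurableSpace Ω} {P : Measure Ω} {ℱ : Filtration ℕ m0}
  {Y : ℕ → Ω → ℝ}

lemma submartingale_sum_div_succ [IsFiniteMeasure P]
    (hadapt : ∀ j, 1 ≤ j → StronglyMeasurable[ℱ j] (Y j)) (hY : ∀ j ω, Y j ω ∈ Set.Icc 0 1)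
    (hle : ∀ n, 1 ≤ n →
      (fun ω => (∑ j ∈ Icc 1 n, Y j ω) / (n + 1)) ≤ᵐ[P] P[Y (n + 1)|ℱ n]) :
    Submartingale (fun n ω => (∑ j ∈ Icc 1 n, Y j ω) / (n + 1)) ℱ P := by
  set S : ℕ → Ω → ℝ := fun n ω => ∑ j ∈ Icc 1 n, Y j ω
  have hYint : ∀ j, 1 ≤ j → Integrable (Y j) P := fun j hj =>
    .of_bound ((hadapt j hj).mono (ℱ.le j)).aestronglyMeasurable 1
      (ae_of_all _ fun ω => by
        rw [Real.norm_eq_abs, abs_le]; exact ⟨by linarith [(hY j ω).1], (hY j ω).2⟩)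
  have hSmeas : ∀ n, StronglyMeasurable[ℱ n] (S n) := fun n =>
    Finset.stronglyMeasurable_fun_sum _ fun j hj =>
      (hadapt j (mem_Icc.1 hj).1).mono (ℱ.mono (mem_Icc.1 hj).2)
  have hSint : ∀ n, Integrable (S n) P := fun n =>
    integrable_finsetSum _ fun j hj => hYint j (mem_Icc.1 hj).1
  have hlow : ∀ n, (fun ω => S n ω / (n + 1)) ≤ᵐ[P] P[Y (n + 1)|ℱ n] := by
    rintro (_ | n)
    · filter_upwards [condExp_nonneg (ae_of_all _ fun ω => (hY 1 ω).1)] with ω hω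
      simpa [S] using hω
    · exact hle _ le_add_self
  have hcond : ∀ n, P[fun ω => S (n + 1) ω / ((n + 1 : ℕ) + 1)|ℱ n]
      =ᵐ[P] fun ω => (n + 2 : ℝ)⁻¹ * (S n ω + P[Y (n + 1)|ℱ n] ω) := by
    intro n
    have hsplit :
        (fun ω => S (n + 1) ω / ((n + 1 : ℕ) + 1)) = (n + 2 : ℝ)⁻¹ • (S n + Y (n + 1)) := by
      ext ω
      simp only [S, sum_Icc_succ_top (Nat.le_add_left 1 n), Pi.smul_apply, Pi.add_apply,
        smul_eq_mul]
      push_cast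
      ring
    rw [hsplit]
    filter_upwards [condExp_smul (μ := P) (n + 2 : ℝ)⁻¹ (S n + Y (n + 1)) (ℱ n),
      condExp_add (hSint n) (hYint (n + 1) le_add_self) (ℱ n)] with ω h1 h2
    rw [h1, Pi.smul_apply, h2, Pi.add_apply,
      condExp_of_stronglyMeasurable (ℱ.le n) (hSmeas n) (hSint n), smul_eq_mul]
  refine submartingale_nat (fun n => ((hSmeas n).measurable.div_const _).stronglyMeasurable)
    (fun n => (hSint n).div_const _) fun n => ?_
  filter_upwards [hlow n, hcond n] with ω hω hcω
  change S n ω / (n + 1) ≤ P[fun ω => S (n + 1) ω / ((n + 1 : ℕ) + 1)|ℱ n] ω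
  rw [hcω, le_inv_mul_iff₀ (by positivity)]
  have : S n ω / (n + 1) * (n + 2) = S n ω + S n ω / (n + 1) := by field_simp; ring
  linarith

lemma ae_exists_tendsto_sum_div [IsProbabilityMeasure P]
    (hadapt : ∀ j, 1 ≤ j → StronglyMeasurable[ℱ j] (Y j)) (hY : ∀ j ω, Y j ω ∈ Set.Icc 0 1)
    (hle : ∀ n, 1 ≤ n →
      (fun ω => (∑ j ∈ Icc 1 n, Y j ω) / (n + 1)) ≤ᵐ[P] P[Y (n + 1)|ℱ n]) :
    ∀ᵐ ω ∂P, ∃ c, Tendsto (fun n : ℕ => (∑ j ∈ Icc 1 n, Y j ω) / n) atTop (𝓝 c) := by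
  have hbound : ∀ n ω, ‖(∑ j ∈ Icc 1 n, Y j ω) / (n + 1)‖ ≤ 1 := fun n ω => by
    have h0 : 0 ≤ ∑ j ∈ Icc 1 n, Y j ω := sum_nonneg fun j _ => (hY j ω).1
    have h1 : ∑ j ∈ Icc 1 n, Y j ω ≤ n := by
      simpa using sum_le_sum fun j (_ : j ∈ Icc 1 n) => (hY j ω).2
    rw [Real.norm_eq_abs, abs_of_nonneg (by positivity), div_le_one (by positivity)]
    linarith
  have hbdd : ∀ n, eLpNorm (fun ω => (∑ j ∈ Icc 1 n, Y j ω) / (n + 1)) 1 P ≤ (1 : NNReal) :=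
    fun n => by simpa using eLpNorm_le_of_ae_bound (μ := P) (p := 1) (ae_of_all _ (hbound n))
  filter_upwards [(submartingale_sum_div_succ hadapt hY hle).exists_ae_tendsto_of_bdd hbdd]
    with ω ⟨c, hc⟩
  refine ⟨c, ?_⟩
  have := hc.div (tendsto_natCast_div_add_atTop (1 : ℝ)) one_ne_zero
  rw [div_one] at this
  refine this.congr' ?_
  filter_upwards [eventually_ne_atTop 0] with n hn
  simp only [Pi.div_apply]
  field_simp

end PartialSums

/-- If `(X m)_{m ≥ 1}` is a `[0,1]`-valued sequence adapted to a filtration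
`ℱ`, whose predictive distributions satisfy the Hill sandwich inequality
`(m/(m+1))·F_m(x) ≤ P(X_{m+1} ≤ x | ℱ m) ≤ (m/(m+1))·F_m(x) + 1/(m+1)` for all `m ≥ 1` and
`x ∈ [0,1)` (with `F_m` the empirical cdf), then for every positive integer `r` the
empirical moments `M_{m,r} = (1/m)·Σ_{j=1}^m (X j)^r` converge almost surely to a random
variable. -/
theorem stmt7 {Ω : Type*} {m0 : MeasurableSpace Ω} (P : Measure Ω) [IsProbabilityMeasure P]
    (ℱ : Filtration ℕ m0) (X : ℕ → Ω → ℝ)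
    (hadapt : ∀ m : ℕ, 1 ≤ m → StronglyMeasurable[ℱ m] (X m))
    (hrange : ∀ m ω, X m ω ∈ Set.Icc (0 : ℝ) 1)
    (hsand : ∀ m : ℕ, 1 ≤ m → ∀ x ∈ Set.Ico (0 : ℝ) 1,
      ∀ᵐ ω ∂P,
        ((m : ℝ) / (m + 1)) *
            ((∑ j ∈ Finset.Icc 1 m, if X j ω ≤ x then (1 : ℝ) else 0) / m)
          ≤ (P[fun ω' => if X (m + 1) ω' ≤ x then (1 : ℝ) else 0|ℱ m]) ω ∧
        (P[fun ω' => if X (m + 1) ω' ≤ x then (1 : ℝ) else 0|ℱ m]) ω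
          ≤ ((m : ℝ) / (m + 1)) *
              ((∑ j ∈ Finset.Icc 1 m, if X j ω ≤ x then (1 : ℝ) else 0) / m)
            + 1 / (m + 1)) :
    ∀ r : ℕ, 0 < r → ∃ M : Ω → ℝ, Measurable M ∧
      ∀ᵐ ω ∂P,
        Tendsto (fun m => (∑ j ∈ Finset.Icc 1 m, X j ω ^ r) / m) atTop (nhds (M ω)) := by
  intro r _
  have hcdf : ∀ x ∈ Set.Ico (0 : ℝ) 1, ∀ᵐ ω ∂P,
      ∃ c, Tendsto (empiricalMean (X · ω) fun t => if t ≤ x then 1 else 0) atTop (𝓝 c) := by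
    intro x hx
    refine ae_exists_tendsto_sum_div (Y := fun j ω => if X j ω ≤ x then (1 : ℝ) else 0) (ℱ := ℱ)
      (fun j hj => ?_) (fun j ω => by split_ifs <;> simp) fun n hn => ?_
    · exact (Measurable.ite (measurableSet_le (hadapt j hj).measurable measurable_const)
        measurable_const measurable_const).stronglyMeasurable
    · filter_upwards [hsand n hn x hx] with ω hω
      refine le_of_eq_of_le ?_ hω.1
      field_simp
  have hgrid : ∀ᵐ ω ∂P, ∀ n i : ℕ, i < n → ∃ c,
      Tendsto (empiricalMean (X · ω) fun t => if t ≤ i / n then 1 else 0) atTop (𝓝 c) := by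
    simp only [ae_all_iff, eventually_imp_distrib_left]
    exact fun n i hi => hcdf _ ⟨by positivity,
      (div_lt_one (by exact_mod_cast Nat.zero_lt_of_lt hi)).2 (by exact_mod_cast hi)⟩
  refine measurable_limit_of_tendsto_metrizable_ae (fun m => ?_) ?_
  · exact ((Finset.measurable_sum _ fun j hj => ((hadapt j (mem_Icc.1 hj).1).mono
      (ℱ.le j)).measurable.pow_const r).div_const _).aemeasurable
  filter_upwards [hgrid] with ω hω
  exact exists_tendsto_empiricalMean_of_tendsto_cdf (fun j => hrange j ω) hω
    (continuous_pow r).continuousOn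
end

section
/- Let n < N be positive integers, let x̄_n ∈ ℝ, let (z_m)_{m>n} be independent standard Gaussian random variables, and define recursively X_{m+1} = x̄_m + z_{m+1} and x̄_{m+1} = (m·x̄_m + X_{m+1})/(m+1) for m ≥ n. Then X_N is a Gaussian random variable with mean x̄_n and variance 1 + Σ_{i=n+1}^{N−1} 1/i². -/
/-! Eliminating `X` from the recursion gives `x̄ (m+1) = x̄ m + z (m+1) / (m+1)`, so
`x̄ (N-1) = a + ∑_{i=n+1}^{N-1} z i / i` and `X N = x̄ (N-1) + z N` is a constant plus a sum of
independent centred Gaussians with variances `1 / i²` and `1`. -/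

open MeasureTheory ProbabilityTheory Finset
open scoped NNReal

namespace ProbabilityTheory

variable {Ω : Type*} [MeasurableSpace Ω] {P : Measure Ω}

lemma hasLaw_of_map_eq {𝓧 : Type*} [MeasurableSpace 𝓧] {μ : Measure 𝓧} [NeZero μ] {Y : Ω → 𝓧}
    (h : P.map Y = μ) : HasLaw Y μ P :=
  ⟨.of_map_ne_zero (h ▸ NeZero.ne μ), h⟩

lemma IndepFun.hasLaw_add_gaussianReal {Y₁ Y₂ : Ω → ℝ} {μ₁ μ₂ : ℝ} {v₁ v₂ : ℝ≥0}
    (hY : IndepFun Y₁ Y₂ P) (h₁ : HasLaw Y₁ (gaussianReal μ₁ v₁) P)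
    (h₂ : HasLaw Y₂ (gaussianReal μ₂ v₂) P) :
    HasLaw (Y₁ + Y₂) (gaussianReal (μ₁ + μ₂) (v₁ + v₂)) P := by
  rw [← gaussianReal_conv_gaussianReal]
  exact hY.hasLaw_add h₁ h₂

lemma iIndepFun.hasLaw_sum_gaussianReal [IsProbabilityMeasure P] {ι : Type*} {Y : ι → Ω → ℝ}
    (hY : iIndepFun Y P) {μ : ι → ℝ} {v : ι → ℝ≥0}
    (hlaw : ∀ i, HasLaw (Y i) (gaussianReal (μ i) (v i)) P) (s : Finset ι) :
    HasLaw (∑ i ∈ s, Y i) (gaussianReal (∑ i ∈ s, μ i) (∑ i ∈ s, v i)) P := by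
  classical
  induction s using Finset.induction_on with
  | empty => exact ⟨aemeasurable_const, by simp [gaussianReal_zero_var, Pi.zero_def]⟩
  | insert i s hi ih =>
    rw [sum_insert hi, sum_insert hi, sum_insert hi, add_comm (Y i), add_comm (μ i), add_comm (v i)]
    exact (hY.indepFun_finsetSum_of_notMem₀ (fun j => (hlaw j).aemeasurable) hi
      ).hasLaw_add_gaussianReal ih (hlaw i)

end ProbabilityTheory

lemma runningMean_eq_add_sum {Ω : Type*} {n : ℕ} {a : ℝ} {z X xbar : ℕ → Ω → ℝ}
    (hinit : ∀ ω, xbar n ω = a)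
    (hX : ∀ m : ℕ, n ≤ m → ∀ ω, X (m + 1) ω = xbar m ω + z (m + 1) ω)
    (hxbar : ∀ m : ℕ, n ≤ m → ∀ ω,
      xbar (m + 1) ω = ((m : ℝ) * xbar m ω + X (m + 1) ω) / (m + 1))
    {m : ℕ} (hm : n ≤ m) (ω : Ω) :
    xbar m ω = a + ∑ i ∈ Ico (n + 1) (m + 1), (i : ℝ)⁻¹ * z i ω := by
  induction m, hm using Nat.le_induction with
  | base => simp [hinit]
  | succ m hm ih =>
    rw [sum_Ico_succ_top (by omega), ← add_assoc, ← ih, hxbar m hm, hX m hm]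
    push_cast
    field_simp
    ring

theorem stmt15_general {Ω : Type*} [MeasurableSpace Ω] (P : Measure Ω) [IsProbabilityMeasure P]
    (n N : ℕ) (hnN : n < N) (a : ℝ)
    (z : ℕ → Ω → ℝ)
    (hindep : iIndepFun (fun i : {m : ℕ // n < m} => z i) P)
    (hgauss : ∀ m : ℕ, n < m → P.map (z m) = gaussianReal 0 1)
    (X xbar : ℕ → Ω → ℝ)
    (hinit : ∀ ω, xbar n ω = a)
    (hX : ∀ m : ℕ, n ≤ m → ∀ ω, X (m + 1) ω = xbar m ω + z (m + 1) ω)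
    (hxbar : ∀ m : ℕ, n ≤ m → ∀ ω,
      xbar (m + 1) ω = ((m : ℝ) * xbar m ω + X (m + 1) ω) / (m + 1)) :
    P.map (X N) = gaussianReal a (1 + ∑ i ∈ Finset.Ico (n + 1) N, ((i : ℝ≥0) ^ 2)⁻¹) := by
  obtain ⟨M, rfl⟩ : ∃ M, N = M + 1 := ⟨N - 1, by omega⟩
  let W (i : {m : ℕ // n < m}) (ω : Ω) : ℝ := (i : ℝ)⁻¹ * z i ω
  have hWlaw (i : {m : ℕ // n < m}) : HasLaw (W i) (gaussianReal 0 ((i : ℝ≥0) ^ 2)⁻¹) P := by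
    convert gaussianReal_const_mul (hasLaw_of_map_eq (hgauss i i.2)) (i : ℝ)⁻¹ using 2
    · simp
    · ext; simp
  have hWindep : iIndepFun W P := hindep.comp _ fun i => measurable_const_mul _
  let s := (Ico (n + 1) (M + 1)).subtype (n < ·)
  have hs {β : Type} [AddCommMonoid β] (f : ℕ → β) :
      ∑ i ∈ s, f i = ∑ i ∈ Ico (n + 1) (M + 1), f i :=
    sum_subtype_of_mem f fun i hi => by simp at hi; omega
  have hSlaw := gaussianReal_const_add (hWindep.hasLaw_sum_gaussianReal hWlaw s) a
  have hSindep : IndepFun (fun ω => a + (∑ i ∈ s, W i) ω) (z (M + 1)) P := by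
    have hz : z (M + 1) = (((M + 1 : ℕ) : ℝ) * ·) ∘ W ⟨M + 1, hnN⟩ := by
      funext ω
      simp only [Function.comp_apply, W]
      field_simp
    rw [hz]
    exact (hWindep.indepFun_finsetSum_of_notMem₀ (fun i => (hWlaw i).aemeasurable)
      (by simp [s])).comp (measurable_const_add a) (measurable_const_mul _)
  have hXN : X (M + 1) = (fun ω => a + (∑ i ∈ s, W i) ω) + z (M + 1) := by
    ext ω
    simp only [Pi.add_apply, hX M (by omega), runningMean_eq_add_sum hinit hX hxbar
      (by omega : n ≤ M), Finset.sum_apply, W, hs fun i => (i : ℝ)⁻¹ * z i ω]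
  have hzlaw := hasLaw_of_map_eq (hgauss (M + 1) (by omega))
  rw [hXN, (hSindep.hasLaw_add_gaussianReal hSlaw hzlaw).map_eq, sum_const_zero, zero_add, add_zero,
    add_comm, hs fun i => ((i : ℝ≥0) ^ 2)⁻¹]

/-- In the normal-model illustration, with `(z m)_{m > n}` independent
standard Gaussians, `X (m+1) = x̄ m + z (m+1)` and `x̄ (m+1) = (m·x̄ m + X (m+1))/(m+1)`
for `m ≥ n`, starting from `x̄ n = a`, the variable `X N` (for `N > n`) is Gaussian with
mean `a` and variance `1 + Σ_{i=n+1}^{N-1} 1/i²`. -/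
theorem stmt15 {Ω : Type*} [MeasurableSpace Ω] (P : Measure Ω) [IsProbabilityMeasure P]
    (n N : ℕ) (hn : 0 < n) (hnN : n < N) (a : ℝ)
    (z : ℕ → Ω → ℝ) (hzmeas : ∀ m, Measurable (z m))
    (hindep : iIndepFun (fun i : {m : ℕ // n < m} => z i) P)
    (hgauss : ∀ m : ℕ, n < m → P.map (z m) = gaussianReal 0 1)
    (X xbar : ℕ → Ω → ℝ)
    (hinit : ∀ ω, xbar n ω = a)
    (hX : ∀ m : ℕ, n ≤ m → ∀ ω, X (m + 1) ω = xbar m ω + z (m + 1) ω)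
    (hxbar : ∀ m : ℕ, n ≤ m → ∀ ω,
      xbar (m + 1) ω = ((m : ℝ) * xbar m ω + X (m + 1) ω) / (m + 1)) :
    P.map (X N) = gaussianReal a (1 + ∑ i ∈ Finset.Ico (n + 1) N, ((i : ℝ≥0) ^ 2)⁻¹) :=
  stmt15_general P n N hnN a z hindep hgauss X xbar hinit hX hxbar
end
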